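/- Let p2, m1, m2 > 0 and set λ = (p2 + m1² + m2²)² − 4·m1²·m2² (which is positive). Then ∫₀¹ dx / (x(1−x)·p2 + x·m2² + (1−x)·m1²) = (1/√λ) · log( (p2 + m1² + m2² + √λ) / (p2 + m1² + m2² − √λ) ). -/

import Mathlib

/-!
For `p2, m1, m2 > 0` the denominator factors as `Δ(x) = p2 (r₊ - x)(x - r₋)` with real roots
`r₋ < 0 < 1 < r₊` and `p2 (r₊ - r₋) = √λ`. Partial fractions give the antiderivative
`(log (x - r₋) - log (r₊ - x)) / (r₊ - r₋)` of `1 / ((r₊ - x)(x - r₋))`, and its values at the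
endpoints combine into the cross ratio `(1 - r₋) r₊ / ((r₊ - 1)(-r₋))`, which equals
`(p2 + m1² + m2² + √λ) / (p2 + m1² + m2² - √λ)`.
-/

open Real Set intervalIntegral

theorem hasDerivAt_log_sub_log_div {r₁ r₂ x : ℝ} (h₂ : r₂ < x) (h₁ : x < r₁) :
    HasDerivAt (fun y => (log (y - r₂) - log (r₁ - y)) / (r₁ - r₂))
      (1 / ((r₁ - x) * (x - r₂))) x := by
  have hx₂ : x - r₂ ≠ 0 := (sub_pos.2 h₂).ne'
  have hx₁ : r₁ - x ≠ 0 := (sub_pos.2 h₁).ne'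
  have hr : r₁ - r₂ ≠ 0 := (sub_pos.2 (h₂.trans h₁)).ne'
  refine ((((hasDerivAt_id x).sub_const r₂).log hx₂).sub
    (((hasDerivAt_id x).const_sub r₁).log hx₁)).div_const (r₁ - r₂) |>.congr_deriv ?_
  simp only [id]
  field_simp
  ring

theorem integral_one_div_mul_sub_sub {a b r₁ r₂ : ℝ} (ha : r₂ < a) (hab : a ≤ b) (hb : b < r₁) :
    ∫ x in a..b, 1 / ((r₁ - x) * (x - r₂)) =
      log ((b - r₂) * (r₁ - a) / ((r₁ - b) * (a - r₂))) / (r₁ - r₂) := by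
  have hmem : ∀ x ∈ uIcc a b, r₂ < x ∧ x < r₁ := fun x hx => by
    rw [uIcc_of_le hab] at hx
    exact ⟨ha.trans_le hx.1, hx.2.trans_lt hb⟩
  have hint : IntervalIntegrable (fun x => 1 / ((r₁ - x) * (x - r₂))) MeasureTheory.volume a b :=
    ContinuousOn.intervalIntegrable <| continuousOn_const.div (by fun_prop) fun x hx =>
      mul_ne_zero (sub_pos.2 (hmem x hx).2).ne' (sub_pos.2 (hmem x hx).1).ne'
  have hb₂ : 0 < b - r₂ := by linarith
  have ha₁ : 0 < r₁ - a := by linarith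
  have hb₁ : 0 < r₁ - b := by linarith
  have ha₂ : 0 < a - r₂ := by linarith
  rw [integral_eq_sub_of_hasDerivAt (fun x hx => hasDerivAt_log_sub_log_div (hmem x hx).1
    (hmem x hx).2) hint, log_div (by positivity) (by positivity), log_mul hb₂.ne' ha₁.ne',
    log_mul hb₁.ne' ha₂.ne']
  ring

/-- The roots `r₊, r₋` of `Δ` are `bubbleRoot p2 m1 m2 s` and `bubbleRoot p2 m1 m2 (-s)`, `s = √λ`. -/
noncomputable def bubbleRoot (p2 m1 m2 s : ℝ) : ℝ := (p2 + m2^2 - m1^2 + s) / (2*p2)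

section bubbleRoot

variable {p2 m1 m2 s : ℝ}

theorem bubble_denom_eq (hp : p2 ≠ 0) (hs : s^2 = (p2 + m1^2 + m2^2)^2 - 4*m1^2*m2^2) (x : ℝ) :
    x*(1-x)*p2 + x*m2^2 + (1-x)*m1^2 =
      p2 * ((bubbleRoot p2 m1 m2 s - x) * (x - bubbleRoot p2 m1 m2 (-s))) := by
  unfold bubbleRoot
  field_simp
  linear_combination (-1) * hs

theorem mul_bubbleRoot_sub_bubbleRoot_neg (hp : p2 ≠ 0) :
    p2 * (bubbleRoot p2 m1 m2 s - bubbleRoot p2 m1 m2 (-s)) = s := by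
  unfold bubbleRoot
  field_simp
  ring

/- The two bounds below come from `λ = (p2 + m2² - m1²)² + 4 p2 m1² = (p2 + m1² - m2²)² + 4 p2 m2²`. -/
theorem bubbleRoot_neg_lt_zero (hp : 0 < p2) (h1 : 0 < m1) (hs₀ : 0 ≤ s)
    (hs : s^2 = (p2 + m1^2 + m2^2)^2 - 4*m1^2*m2^2) : bubbleRoot p2 m1 m2 (-s) < 0 := by
  have : p2 + m2^2 - m1^2 < s := by nlinarith [mul_pos hp (mul_pos h1 h1)]
  exact div_neg_of_neg_of_pos (by linarith) (by positivity)

theorem one_lt_bubbleRoot (hp : 0 < p2) (h2 : 0 < m2) (hs₀ : 0 ≤ s)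
    (hs : s^2 = (p2 + m1^2 + m2^2)^2 - 4*m1^2*m2^2) : 1 < bubbleRoot p2 m1 m2 s := by
  have : p2 + m1^2 - m2^2 < s := by nlinarith [mul_pos hp (mul_pos h2 h2)]
  rw [bubbleRoot, one_lt_div (by positivity)]
  linarith

theorem bubbleRoot_cross_ratio_eq (hp : 0 < p2) (h1 : 0 < m1) (h2 : 0 < m2) (hs₀ : 0 ≤ s)
    (hs : s^2 = (p2 + m1^2 + m2^2)^2 - 4*m1^2*m2^2) :
    (1 - bubbleRoot p2 m1 m2 (-s)) * (bubbleRoot p2 m1 m2 s - 0) /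
        ((bubbleRoot p2 m1 m2 s - 1) * (0 - bubbleRoot p2 m1 m2 (-s))) =
      (p2 + m1^2 + m2^2 + s) / (p2 + m1^2 + m2^2 - s) := by
  have hr₁ := one_lt_bubbleRoot hp h2 hs₀ hs
  have hr₂ := bubbleRoot_neg_lt_zero hp h1 hs₀ hs
  have hA : 0 < p2 + m1^2 + m2^2 - s := by nlinarith [mul_pos (mul_pos h1 h1) (mul_pos h2 h2)]
  rw [div_eq_div_iff (by nlinarith) hA.ne']
  unfold bubbleRoot
  field_simp
  linear_combination (-2*s) * hs

end bubbleRoot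

theorem bubble_integral_two_dimensions (p2 m1 m2 : ℝ)
    (hp : 0 < p2) (h1 : 0 < m1) (h2 : 0 < m2) :
    ∫ x in (0:ℝ)..1, 1 / (x*(1-x)*p2 + x*m2^2 + (1-x)*m1^2)
      = (1 / Real.sqrt ((p2 + m1^2 + m2^2)^2 - 4*m1^2*m2^2)) *
        Real.log ((p2 + m1^2 + m2^2 + Real.sqrt ((p2 + m1^2 + m2^2)^2 - 4*m1^2*m2^2)) /
                  (p2 + m1^2 + m2^2 - Real.sqrt ((p2 + m1^2 + m2^2)^2 - 4*m1^2*m2^2))) := by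
  set s := Real.sqrt ((p2 + m1^2 + m2^2)^2 - 4*m1^2*m2^2)
  have hlam : 0 < (p2 + m1^2 + m2^2)^2 - 4*m1^2*m2^2 := by
    nlinarith [mul_pos (show (0:ℝ) < p2 + (m1-m2)^2 by positivity)
      (show (0:ℝ) < p2 + (m1+m2)^2 by positivity)]
  have hs₀ : 0 ≤ s := Real.sqrt_nonneg _
  have hs : s^2 = (p2 + m1^2 + m2^2)^2 - 4*m1^2*m2^2 := Real.sq_sqrt hlam.le
  calc ∫ x in (0:ℝ)..1, 1 / (x*(1-x)*p2 + x*m2^2 + (1-x)*m1^2)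
      = ∫ x in (0:ℝ)..1, p2⁻¹ * (1 / ((bubbleRoot p2 m1 m2 s - x) *
          (x - bubbleRoot p2 m1 m2 (-s)))) := by
        simp_rw [bubble_denom_eq hp.ne' hs, one_div, mul_inv]
    _ = p2⁻¹ * (log ((p2 + m1^2 + m2^2 + s) / (p2 + m1^2 + m2^2 - s)) /
          (bubbleRoot p2 m1 m2 s - bubbleRoot p2 m1 m2 (-s))) := by
        rw [intervalIntegral.integral_const_mul, integral_one_div_mul_sub_sub
          (bubbleRoot_neg_lt_zero hp h1 hs₀ hs) zero_le_one (one_lt_bubbleRoot hp h2 hs₀ hs),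
          bubbleRoot_cross_ratio_eq hp h1 h2 hs₀ hs]
    _ = _ := by
        rw [inv_mul_eq_div, div_div, mul_comm _ p2, mul_bubbleRoot_sub_bubbleRoot_neg hp.ne',
          one_div_mul_eq_div]
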